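/- Let p > 3 be a prime and let m ≥ 1 be an integer with p ∤ m and 3m < p − 3. Define F₃(X) = (∑_{i=0}^{3p−10} X^i) − X^{3p−6} · (1 + X³ + X⁶) · (∑_{i=0}^{p−4−3m} X^i) ∈ ℤ[X]. Then M_{3p}(F₃) = 3⁴·m = 81m. -/

import Mathlib

open Polynomial

section AuxLemmas

open Finset

lemma aux_prod_X_sub {η : ℂ} {n : ℕ} (hn : 0 < n) (h : IsPrimitiveRoot η n) :
    ∏ j ∈ Finset.range n, (X - C (η ^ j)) = X ^ n - 1 := by
  rw [X_pow_sub_one_eq_prod hn h]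
  apply Finset.prod_bij (fun j _ => η ^ j)
  · intro a ha
    rw [Polynomial.mem_nthRootsFinset hn, ← pow_mul, mul_comm, pow_mul, h.pow_eq_one, one_pow]
  · intro a ha b hb hab
    exact h.pow_inj (mem_range.mp ha) (mem_range.mp hb) hab
  · intro b hb
    have : NeZero n := ⟨hn.ne'⟩
    obtain ⟨i, hi, hip⟩ := h.eq_pow_of_pow_eq_one ((Polynomial.mem_nthRootsFinset hn (1 : ℂ)).mp hb)
    exact ⟨i, mem_range.mpr hi, hip⟩
  · intros; rfl

lemma aux_prod_eval {η : ℂ} {n : ℕ} (hn : 0 < n) (h : IsPrimitiveRoot η n) (x : ℂ) :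
    ∏ j ∈ Finset.range n, (x - η ^ j) = x ^ n - 1 := by
  have := congrArg (Polynomial.eval x) (aux_prod_X_sub hn h)
  simpa [eval_prod] using this

lemma aux_prod_Ico_geom {η : ℂ} {n : ℕ} (hn : 0 < n) (h : IsPrimitiveRoot η n) :
    ∏ j ∈ Finset.Ico 1 n, (X - C (η ^ j)) = ∑ i ∈ Finset.range n, (X : ℂ[X]) ^ i := by
  have h1 : (X - C (1 : ℂ)) * ∏ j ∈ Finset.Ico 1 n, (X - C (η ^ j)) = X ^ n - 1 := by
    rw [← aux_prod_X_sub hn h, Finset.range_eq_Ico, Finset.prod_eq_prod_Ico_succ_bot hn]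
    simp
  have h2 : (X - C (1 : ℂ)) * ∑ i ∈ Finset.range n, (X : ℂ[X]) ^ i = X ^ n - 1 := by
    rw [mul_comm, map_one]
    exact geom_sum_mul X n
  exact mul_left_cancel₀ (X_sub_C_ne_zero 1) (h1.trans h2.symm)

lemma aux_prod_Ico_one_sub {η : ℂ} {n : ℕ} (hn : 0 < n) (h : IsPrimitiveRoot η n) :
    ∏ j ∈ Finset.Ico 1 n, (1 - η ^ j) = (n : ℂ) := by
  have := congrArg (Polynomial.eval 1) (aux_prod_Ico_geom hn h)
  simpa [eval_prod, eval_finset_sum] using this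

noncomputable def fval (p m : ℕ) (w : ℂ) : ℂ :=
  (∑ i ∈ Finset.range (3 * p - 9), w ^ i)
    - w ^ (3 * p - 6) * (1 + w ^ 3 + w ^ 6) * (∑ i ∈ Finset.range (p - 3 - 3 * m), w ^ i)

lemma aux_key {p m : ℕ} (hp7 : 7 ≤ p) (hlt : 3 * m < p - 3) (w : ℂ) (hw : w ^ (3 * p) = 1) :
    w ^ 9 * (w - 1) * fval p m w
      = (1 + w ^ 3 + w ^ 6) * (1 - w ^ (p - 3 * m)) := by
  have g1 := geom_sum_mul w (3 * p - 9)
  have g2 := geom_sum_mul w (p - 3 - 3 * m)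
  have e1 : w ^ 9 * w ^ (3 * p - 9) = 1 := by
    rw [← pow_add, show 9 + (3 * p - 9) = 3 * p by omega]; exact hw
  have e2 : w ^ 9 * w ^ (3 * p - 6) = w ^ 3 := by
    rw [← pow_add, show 9 + (3 * p - 6) = 3 * p + 3 by omega, pow_add, hw, one_mul]
  have e3 : w ^ 3 * w ^ (p - 3 - 3 * m) = w ^ (p - 3 * m) := by
    rw [← pow_add, show 3 + (p - 3 - 3 * m) = p - 3 * m by omega]
  unfold fval
  linear_combination (w ^ 9) * g1 - w ^ 9 * w ^ (3 * p - 6) * (1 + w ^ 3 + w ^ 6) * g2 + e1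
    + (1 + w ^ 3 + w ^ 6) * (1 - w ^ (p - 3 - 3 * m)) * e2 - (1 + w ^ 3 + w ^ 6) * e3

lemma aux_inner {η : ℂ} {p : ℕ} (hp0 : 0 < p) (h3 : ¬ 3 ∣ p) (hη : IsPrimitiveRoot η p) :
    ∏ j ∈ Finset.range p, (1 + η ^ j + (η ^ j) ^ 2) = 3 := by
  set ω : ℂ := Complex.exp (2 * Real.pi * Complex.I / 3) with hωdef
  have hω : IsPrimitiveRoot ω 3 := Complex.isPrimitiveRoot_exp 3 (by norm_num)
  have hω3 : ω ^ 3 = 1 := hω.pow_eq_one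
  have hωne : ω ≠ 1 := hω.ne_one (by norm_num)
  have hωsum : ω ^ 2 + ω + 1 = 0 := by
    have h0 : (ω - 1) * (ω ^ 2 + ω + 1) = 0 := by linear_combination hω3
    rcases mul_eq_zero.mp h0 with h | h
    · exact absurd (sub_eq_zero.mp h) hωne
    · exact h
  have hfac : ∀ u : ℂ, 1 + u + u ^ 2 = (ω - u) * (ω ^ 2 - u) := by
    intro u; linear_combination (-1 : ℂ) * hω3 + u * hωsum
  calc ∏ j ∈ Finset.range p, (1 + η ^ j + (η ^ j) ^ 2)
      = (∏ j ∈ Finset.range p, (ω - η ^ j)) * (∏ j ∈ Finset.range p, (ω ^ 2 - η ^ j)) := by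
        rw [← Finset.prod_mul_distrib]; exact Finset.prod_congr rfl fun j _ => hfac _
    _ = (ω ^ p - 1) * ((ω ^ 2) ^ p - 1) := by
        rw [aux_prod_eval hp0 hη, aux_prod_eval hp0 hη]
    _ = 3 := by
        have hmod : ω ^ p = ω ^ (p % 3) := by
          conv_lhs => rw [← Nat.div_add_mod p 3]
          rw [pow_add, pow_mul, hω3, one_pow, one_mul]
        have h2p : (ω ^ 2) ^ p = (ω ^ (p % 3)) ^ 2 := by rw [pow_right_comm, hmod]
        rw [hmod, h2p]
        have hcase : p % 3 = 1 ∨ p % 3 = 2 := by omega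
        rcases hcase with h | h <;> rw [h]
        · linear_combination hω3 - hωsum
        · linear_combination (ω ^ 3 + 1 - ω) * hω3 - hωsum

end AuxLemmas

/-- `Mnorm n F` is the product of `F` over all `n`-th roots of unity in `ℂ`. -/
noncomputable def Mnorm (n : ℕ) (F : Polynomial ℤ) : ℂ :=
  ∏ j ∈ Finset.range n,
    Polynomial.aeval (Complex.exp (2 * ↑Real.pi * Complex.I * (j : ℂ) / (n : ℂ))) F

theorem stmt6 (p : ℕ) (hp : Nat.Prime p) (hp3 : 3 < p)
    (m : ℕ) (hm : 1 ≤ m) (hpm : ¬ p ∣ m) (hlt : 3 * m < p - 3) :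
    Mnorm (3 * p)
      ((∑ i ∈ Finset.range (3 * p - 9), (X : Polynomial ℤ) ^ i)
        - X ^ (3 * p - 6) * (1 + X ^ 3 + X ^ 6)
          * (∑ i ∈ Finset.range (p - 3 - 3 * m), (X : Polynomial ℤ) ^ i))
      = 81 * (m : ℂ) := by
  have hp7 : 7 ≤ p := by omega
  obtain ⟨t, ht⟩ := hp.odd_of_ne_two (by omega)
  have hN0 : 3 * p ≠ 0 := by omega
  have hNpos : 0 < 3 * p := by omega
  have hζ := Complex.isPrimitiveRoot_exp (3 * p) hN0
  set ζ : ℂ := Complex.exp (2 * ↑Real.pi * Complex.I / ((3 * p : ℕ) : ℂ)) with hζdef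
  have hroot : ∀ j : ℕ, (ζ ^ j) ^ (3 * p) = 1 := by
    intro j; rw [← pow_mul, mul_comm j, pow_mul, hζ.pow_eq_one, one_pow]
  have hexp : ∀ j : ℕ,
      Complex.exp (2 * ↑Real.pi * Complex.I * (j : ℂ) / ((3 * p : ℕ) : ℂ)) = ζ ^ j := by
    intro j
    rw [hζdef, ← Complex.exp_nat_mul]
    congr 1
    ring
  have hgoal : Mnorm (3 * p)
      ((∑ i ∈ Finset.range (3 * p - 9), (X : Polynomial ℤ) ^ i)
        - X ^ (3 * p - 6) * (1 + X ^ 3 + X ^ 6)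
          * (∑ i ∈ Finset.range (p - 3 - 3 * m), (X : Polynomial ℤ) ^ i))
      = ∏ j ∈ Finset.range (3 * p), fval p m (ζ ^ j) := by
    unfold Mnorm
    refine Finset.prod_congr rfl fun j _ => ?_
    rw [hexp j]
    simp [fval, map_sum]
  rw [hgoal]
  -- value at 1
  have hf1 : fval p m 1 = 9 * (m : ℂ) := by
    unfold fval
    simp only [one_pow, Finset.sum_const, Finset.card_range, nsmul_eq_mul, mul_one, one_mul]
    rw [Nat.cast_sub (by omega : 9 ≤ 3 * p), Nat.cast_sub (by omega : 3 * m ≤ p - 3),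
      Nat.cast_sub (by omega : 3 ≤ p)]
    push_cast
    ring
  -- split off j = 0
  have hsplit : ∏ j ∈ Finset.range (3 * p), fval p m (ζ ^ j)
      = fval p m 1 * ∏ j ∈ Finset.Ico 1 (3 * p), fval p m (ζ ^ j) := by
    rw [Finset.range_eq_Ico, Finset.prod_eq_prod_Ico_succ_bot hNpos]
    simp
  -- the big product identity
  have hbig : ∏ j ∈ Finset.Ico 1 (3 * p), ((ζ ^ j) ^ 9 * ((ζ ^ j - 1) * fval p m (ζ ^ j)))
      = ∏ j ∈ Finset.Ico 1 (3 * p),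
          ((1 + (ζ ^ j) ^ 3 + (ζ ^ j) ^ 6) * (1 - (ζ ^ j) ^ (p - 3 * m))) := by
    refine Finset.prod_congr rfl fun j _ => ?_
    rw [← mul_assoc]
    exact aux_key hp7 hlt _ (hroot j)
  simp only [Finset.prod_mul_distrib] at hbig
  -- T1
  have hT1 : ∏ j ∈ Finset.Ico 1 (3 * p), (ζ ^ j) ^ 9 = 1 := by
    rw [Finset.prod_pow]
    have h1 : ∏ j ∈ Finset.Ico 1 (3 * p), ζ ^ j = 1 := by
      rw [Finset.prod_pow_eq_pow_sum, hζ.pow_eq_one_iff_dvd]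
      have hIco : ∑ j ∈ Finset.Ico 1 (3 * p), j = ∑ j ∈ Finset.range (3 * p), j := by
        rw [Finset.range_eq_Ico, Finset.sum_eq_sum_Ico_succ_bot hNpos]
        simp
      refine ⟨3 * t + 1, ?_⟩
      apply Nat.eq_of_mul_eq_mul_right (show 0 < 2 by norm_num)
      rw [hIco, Finset.sum_range_id_mul_two, show 3 * p - 1 = 2 * (3 * t + 1) by omega]
      ring
    rw [h1, one_pow]
  -- T2
  have hT2 : ∏ j ∈ Finset.Ico 1 (3 * p), (ζ ^ j - 1) = ((3 * p : ℕ) : ℂ) := by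
    have h1 : ∏ j ∈ Finset.Ico 1 (3 * p), (ζ ^ j - 1)
        = (-1 : ℂ) ^ (Finset.Ico 1 (3 * p)).card * ∏ j ∈ Finset.Ico 1 (3 * p), (1 - ζ ^ j) := by
      rw [← Finset.prod_const, ← Finset.prod_mul_distrib]
      exact Finset.prod_congr rfl fun j _ => by ring
    rw [h1, aux_prod_Ico_one_sub hNpos hζ, Nat.card_Ico]
    have h2 : (-1 : ℂ) ^ (3 * p - 1) = 1 := Even.neg_one_pow ⟨3 * t + 1, by omega⟩
    rw [h2, one_mul]
  -- T3
  have hT3 : ∏ j ∈ Finset.Ico 1 (3 * p), (1 - (ζ ^ j) ^ (p - 3 * m)) = ((3 * p : ℕ) : ℂ) := by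
    have hkpos : 0 < p - 3 * m := by omega
    have hcop : Nat.Coprime (p - 3 * m) (3 * p) := by
      apply Nat.Coprime.mul_right
      · rcases Nat.coprime_or_dvd_of_prime (by norm_num : Nat.Prime 3) (p - 3 * m) with h | h
        · exact Nat.coprime_comm.mp h
        · exfalso
          obtain ⟨c, hc⟩ := h
          have h3p : 3 ∣ p := ⟨c + m, by omega⟩
          have := (Nat.prime_dvd_prime_iff_eq (by norm_num) hp).mp h3p
          omega
      · rcases Nat.coprime_or_dvd_of_prime hp (p - 3 * m) with h | h
        · exact Nat.coprime_comm.mp h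
        · exfalso
          have := Nat.le_of_dvd hkpos h
          omega
    have hζk : IsPrimitiveRoot (ζ ^ (p - 3 * m)) (3 * p) := hζ.pow_of_coprime _ hcop
    calc ∏ j ∈ Finset.Ico 1 (3 * p), (1 - (ζ ^ j) ^ (p - 3 * m))
        = ∏ j ∈ Finset.Ico 1 (3 * p), (1 - (ζ ^ (p - 3 * m)) ^ j) :=
          Finset.prod_congr rfl fun j _ => by rw [pow_right_comm]
      _ = _ := aux_prod_Ico_one_sub hNpos hζk
  -- T4
  have hT4 : ∏ j ∈ Finset.Ico 1 (3 * p), (1 + (ζ ^ j) ^ 3 + (ζ ^ j) ^ 6) = 9 := by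
    have hη : IsPrimitiveRoot (ζ ^ 3) p := hζ.pow hNpos rfl
    have hterm : ∀ j : ℕ, 1 + (ζ ^ j) ^ 3 + (ζ ^ j) ^ 6
        = 1 + (ζ ^ 3) ^ j + ((ζ ^ 3) ^ j) ^ 2 := by
      intro j
      rw [pow_right_comm ζ j 3]
      congr 1
      rw [← pow_mul, ← pow_mul, ← pow_mul]
      congr 1
      ring
    have hper : ∀ a j : ℕ, (ζ ^ 3) ^ (a * p + j) = (ζ ^ 3) ^ j := by
      intro a j; rw [pow_add, mul_comm a p, pow_mul, hη.pow_eq_one, one_pow, one_mul]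
    have c2 : ∏ j ∈ Finset.Ico p (2 * p), (1 + (ζ ^ 3) ^ j + ((ζ ^ 3) ^ j) ^ 2)
        = ∏ j ∈ Finset.range p, (1 + (ζ ^ 3) ^ j + ((ζ ^ 3) ^ j) ^ 2) := by
      rw [Finset.prod_Ico_eq_prod_range, show 2 * p - p = p by omega]
      exact Finset.prod_congr rfl fun j _ => by
        rw [show p + j = 1 * p + j by ring, hper]
    have c3 : ∏ j ∈ Finset.Ico (2 * p) (3 * p), (1 + (ζ ^ 3) ^ j + ((ζ ^ 3) ^ j) ^ 2)
        = ∏ j ∈ Finset.range p, (1 + (ζ ^ 3) ^ j + ((ζ ^ 3) ^ j) ^ 2) := by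
      rw [Finset.prod_Ico_eq_prod_range, show 3 * p - 2 * p = p by omega]
      exact Finset.prod_congr rfl fun j _ => by
        rw [show 2 * p + j = 2 * p + j by ring, hper]
    have hfull : ∏ j ∈ Finset.range (3 * p), (1 + (ζ ^ 3) ^ j + ((ζ ^ 3) ^ j) ^ 2)
        = (∏ j ∈ Finset.range p, (1 + (ζ ^ 3) ^ j + ((ζ ^ 3) ^ j) ^ 2)) ^ 3 := by
      rw [Finset.range_eq_Ico,
        ← Finset.prod_Ico_consecutive _ (show 0 ≤ 2 * p by omega) (show 2 * p ≤ 3 * p by omega),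
        ← Finset.prod_Ico_consecutive _ (show 0 ≤ p by omega) (show p ≤ 2 * p by omega),
        ← Finset.range_eq_Ico, c2, c3]
      ring
    have h3p : ¬ 3 ∣ p := by
      intro h
      have := (Nat.prime_dvd_prime_iff_eq (by norm_num) hp).mp h
      omega
    have hinner := aux_inner (show 0 < p by omega) h3p hη
    have hsplit4 : ∏ j ∈ Finset.range (3 * p), (1 + (ζ ^ 3) ^ j + ((ζ ^ 3) ^ j) ^ 2)
        = 3 * ∏ j ∈ Finset.Ico 1 (3 * p), (1 + (ζ ^ 3) ^ j + ((ζ ^ 3) ^ j) ^ 2) := by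
      rw [Finset.range_eq_Ico, Finset.prod_eq_prod_Ico_succ_bot hNpos]
      norm_num
    have h27 : (3 : ℂ) * ∏ j ∈ Finset.Ico 1 (3 * p), (1 + (ζ ^ 3) ^ j + ((ζ ^ 3) ^ j) ^ 2)
        = 3 * 9 := by
      rw [← hsplit4, hfull, hinner]; norm_num
    have h9 := mul_left_cancel₀ (show (3 : ℂ) ≠ 0 by norm_num) h27
    calc ∏ j ∈ Finset.Ico 1 (3 * p), (1 + (ζ ^ j) ^ 3 + (ζ ^ j) ^ 6)
        = ∏ j ∈ Finset.Ico 1 (3 * p), (1 + (ζ ^ 3) ^ j + ((ζ ^ 3) ^ j) ^ 2) :=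
          Finset.prod_congr rfl fun j _ => hterm j
      _ = 9 := h9
  -- assemble
  rw [hT1, hT2, hT3, hT4] at hbig
  have hNne : ((3 * p : ℕ) : ℂ) ≠ 0 := Nat.cast_ne_zero.mpr hN0
  have hQ : ∏ j ∈ Finset.Ico 1 (3 * p), fval p m (ζ ^ j) = 9 := by
    apply mul_left_cancel₀ hNne
    linear_combination hbig
  rw [hsplit, hf1, hQ]
  ring
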